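/- For n ≥ 4, 1 ≤ i ≤ ⌊(n-1)/2⌋ and r, s ≥ 0, one has g^r ∘ x_i ∘ g^s = x_i (as partial bijections) if and only if r ≡ 0 and s ≡ 0 modulo n; in particular, for 0 ≤ r, s ≤ n-1, g^r x_i g^s = x_i iff r = s = 0. -/

import Mathlib

/-- Powers in the symmetric inverse monoid (left-to-right composition). -/
def dPow (f : PartialEquiv ℕ ℕ) : ℕ → PartialEquiv ℕ ℕ
  | 0 => PartialEquiv.refl ℕ
  | k + 1 => (dPow f k).trans f

/-- The partial identity `e_j` on `{1,…,n} \ {j}`. -/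
def dE (n j : ℕ) : PartialEquiv ℕ ℕ := PartialEquiv.ofSet (Set.Icc 1 n \ {j})

/-- The `n`-cycle `g : i ↦ i+1 (mod n)` on `{1,…,n}`. -/
def dCyc (n : ℕ) : PartialEquiv ℕ ℕ where
  toFun k := if k = n then 1 else k + 1
  invFun k := if k = 1 then n else k - 1
  source := Set.Icc 1 n
  target := Set.Icc 1 n
  map_source' := by
    intro k hk
    simp only [Set.mem_Icc] at *
    split_ifs <;> omega
  map_target' := by
    intro k hk
    simp only [Set.mem_Icc] at *
    split_ifs <;> omega
  left_inv' := by
    intro k hk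
    simp only [Set.mem_Icc] at hk
    (try dsimp only)
    split_ifs <;> omega
  right_inv' := by
    intro k hk
    simp only [Set.mem_Icc] at hk
    (try dsimp only)
    split_ifs <;> omega

/-- The reversal `h : k ↦ n+1-k` on `{1,…,n}`. -/
def dRev (n : ℕ) : PartialEquiv ℕ ℕ where
  toFun k := n + 1 - k
  invFun k := n + 1 - k
  source := Set.Icc 1 n
  target := Set.Icc 1 n
  map_source' := by
    intro k hk; simp only [Set.mem_Icc] at *; omega
  map_target' := by
    intro k hk; simp only [Set.mem_Icc] at *; omega
  left_inv' := by
    intro k hk; simp only [Set.mem_Icc] at hk; (try dsimp only); omega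
  right_inv' := by
    intro k hk; simp only [Set.mem_Icc] at hk; (try dsimp only); omega

/-- The partial shift `x : j ↦ j+1` with domain `{1,…,n-1}`. -/
def dShift (n : ℕ) : PartialEquiv ℕ ℕ where
  toFun k := k + 1
  invFun k := k - 1
  source := Set.Icc 1 (n - 1)
  target := Set.Icc 2 n
  map_source' := by
    intro k hk; simp only [Set.mem_Icc] at *; omega
  map_target' := by
    intro k hk; simp only [Set.mem_Icc] at *; omega
  left_inv' := by
    intro k hk; simp only [Set.mem_Icc] at hk; (try dsimp only); omega
  right_inv' := by
    intro k hk; simp only [Set.mem_Icc] at hk; (try dsimp only); omega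

/-- The rank-2 partial bijection `x_i` with domain `{1, 1+i}`, sending
`1 ↦ 1` and `1+i ↦ n-i+1`. -/
def dXi (n i : ℕ) (h1 : 1 ≤ i) (h2 : i < n) : PartialEquiv ℕ ℕ where
  toFun k := if k = 1 then 1 else n - i + 1
  invFun k := if k = 1 then 1 else 1 + i
  source := {1, 1 + i}
  target := {1, n - i + 1}
  map_source' := by
    intro k _
    (try dsimp only)
    split_ifs <;> simp
  map_target' := by
    intro k _
    (try dsimp only)
    split_ifs <;> simp
  left_inv' := by
    intro k hk
    simp only [Set.mem_insert_iff, Set.mem_singleton_iff] at hk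
    rcases hk with rfl | rfl <;> ((try dsimp only); split_ifs <;> omega)
  right_inv' := by
    intro k hk
    simp only [Set.mem_insert_iff, Set.mem_singleton_iff] at hk
    rcases hk with rfl | rfl <;> ((try dsimp only); split_ifs <;> omega)

/-! The proof is a computation on `{1, …, n}`, where `g^r` is `k ↦ (k - 1 + r) % n + 1`.
If `g^r x_i g^s = x_i`, both `g^r 1` and `g^r (1 + i)` lie in the domain `{1, 1 + i}` of `x_i`,
i.e. `r % n` and `(i + r) % n` lie in `{0, i}`; as `0 < i` and `2 i < n`, this forces `r % n = 0`.
Then `g^r` fixes `{1, …, n}` pointwise, and evaluating at `1` gives `g^s 1 = s % n + 1 = 1`.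
Conversely, for `r ≡ s ≡ 0` both powers of `g` act as the identity on the domain and range
of `x_i`. -/

open Set

namespace PartialEquiv

variable {α : Type*} {e x : PartialEquiv α α}

theorem trans_eqOnSource_of_eqOn_id_left (hsub : x.source ⊆ e.source)
    (hid : EqOn e id x.source) : e.trans x ≈ x := by
  have hsrc : (e.trans x).source = x.source := by
    ext k
    simp only [trans_source, mem_inter_iff, mem_preimage]
    refine ⟨fun ⟨hk, hek⟩ => ?_, fun hk => ⟨hsub hk, by rwa [hid hk]⟩⟩
    -- `e` fixes `e k`, so injectivity of `e` on its source gives `e k = k`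
    rwa [← e.injOn (hsub hek) hk (hid hek)]
  refine ⟨hsrc, fun k hk => ?_⟩
  rw [hsrc] at hk
  simp [hid hk]

theorem trans_eqOnSource_of_eqOn_id_right (hsub : x.target ⊆ e.source)
    (hid : EqOn e id x.target) : x.trans e ≈ x := by
  have hsrc : (x.trans e).source = x.source := by
    rw [trans_source]
    exact inter_eq_left.mpr fun k hk => hsub (x.map_source hk)
  refine ⟨hsrc, fun k hk => ?_⟩
  rw [hsrc] at hk
  simp [hid (x.map_source hk)]

end PartialEquiv

theorem dCyc_apply {n k : ℕ} (hk : k ∈ Icc 1 n) : dCyc n k = k % n + 1 := by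
  show (if k = n then 1 else k + 1) = _
  split_ifs with h
  · simp [h]
  · rw [Nat.mod_eq_of_lt (by grind)]

theorem mod_add_one_mem_Icc {n : ℕ} (hn : 0 < n) (m : ℕ) : m % n + 1 ∈ Icc 1 n :=
  ⟨by omega, Nat.mod_lt m hn⟩

theorem dPow_dCyc_apply {n k : ℕ} (hk : k ∈ Icc 1 n) (r : ℕ) :
    dPow (dCyc n) r k = (k - 1 + r) % n + 1 := by
  induction r with
  | zero =>
    show k = _
    rw [add_zero, Nat.mod_eq_of_lt (by grind), Nat.sub_add_cancel hk.1]
  | succ r ih =>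
    show dCyc n (dPow (dCyc n) r k) = _
    rw [ih, dCyc_apply (mod_add_one_mem_Icc (by grind) _), Nat.mod_add_mod, add_assoc]

theorem dPow_dCyc_one (n r : ℕ) (hn : 0 < n) : dPow (dCyc n) r 1 = r % n + 1 := by
  simp [dPow_dCyc_apply (show 1 ∈ Icc 1 n from ⟨le_rfl, hn⟩)]

theorem Icc_subset_dPow_dCyc_source (n r : ℕ) : Icc 1 n ⊆ (dPow (dCyc n) r).source := by
  induction r with
  | zero => exact subset_univ _
  | succ r ih =>
    intro k hk
    refine ⟨ih hk, ?_⟩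
    show dPow (dCyc n) r k ∈ Icc 1 n
    rw [dPow_dCyc_apply hk]
    exact mod_add_one_mem_Icc (by grind) _

theorem eqOn_dPow_dCyc_id_of_mod_eq_zero {n r : ℕ} (hr : r % n = 0) :
    EqOn (dPow (dCyc n) r) id (Icc 1 n) := by
  intro k hk
  rw [dPow_dCyc_apply hk, Nat.add_mod, hr, add_zero, Nat.mod_mod,
    Nat.mod_eq_of_lt (show k - 1 < n by grind)]
  grind

theorem dXi_source_subset {n i : ℕ} (h1 : 1 ≤ i) (h2 : i < n) :
    (dXi n i h1 h2).source ⊆ Icc 1 n := by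
  rintro k (rfl | rfl) <;> constructor <;> omega

theorem dXi_target_subset {n i : ℕ} (h1 : 1 ≤ i) (h2 : i < n) :
    (dXi n i h1 h2).target ⊆ Icc 1 n := by
  rintro k (rfl | rfl) <;> constructor <;> omega

theorem trans_dXi_trans_eqOnSource_of_mod_eq_zero {n i r s : ℕ} (h1 : 1 ≤ i) (h2 : i < n)
    (hr : r % n = 0) (hs : s % n = 0) :
    ((dPow (dCyc n) r).trans (dXi n i h1 h2)).trans (dPow (dCyc n) s) ≈ dXi n i h1 h2 := by
  have hleft := PartialEquiv.trans_eqOnSource_of_eqOn_id_left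
    ((dXi_source_subset h1 h2).trans (Icc_subset_dPow_dCyc_source n r))
    ((eqOn_dPow_dCyc_id_of_mod_eq_zero hr).mono (dXi_source_subset h1 h2))
  have hright := PartialEquiv.trans_eqOnSource_of_eqOn_id_right
    ((dXi_target_subset h1 h2).trans (Icc_subset_dPow_dCyc_source n s))
    ((eqOn_dPow_dCyc_id_of_mod_eq_zero hs).mono (dXi_target_subset h1 h2))
  exact Setoid.trans (hleft.trans' (Setoid.refl _)) hright

theorem mod_eq_zero_of_mod_mem_of_add_mod_mem {n i r : ℕ} (h1 : 0 < i) (h2 : 2 * i < n)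
    (hr : r % n = 0 ∨ r % n = i) (hir : (i + r) % n = 0 ∨ (i + r) % n = i) : r % n = 0 := by
  refine hr.resolve_right fun hri => ?_
  rw [Nat.add_mod, hri, Nat.mod_eq_of_lt (show i < n by omega),
    Nat.mod_eq_of_lt (show i + i < n by omega)] at hir
  omega

theorem mod_eq_zero_of_trans_dXi_trans_eqOnSource {n i r s : ℕ} (h1 : 1 ≤ i) (h2 : i < n)
    (h2i : 2 * i < n)
    (h : ((dPow (dCyc n) r).trans (dXi n i h1 h2)).trans (dPow (dCyc n) s) ≈ dXi n i h1 h2) :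
    r % n = 0 ∧ s % n = 0 := by
  obtain ⟨hsrc, happ⟩ := h
  have hmaps : ∀ k ∈ (dXi n i h1 h2).source, dPow (dCyc n) r k ∈ (dXi n i h1 h2).source := by
    intro k hk
    rw [← hsrc] at hk
    exact hk.1.2
  have hr : r % n = 0 := by
    have hr1 := hmaps 1 (Or.inl rfl)
    have hri := hmaps (1 + i) (Or.inr rfl)
    rw [dPow_dCyc_one n r (by omega)] at hr1
    rw [dPow_dCyc_apply (show 1 + i ∈ Icc 1 n by constructor <;> omega)] at hri
    simp only [dXi, Nat.add_sub_cancel_left, mem_insert_iff, mem_singleton_iff] at hr1 hri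
    exact mod_eq_zero_of_mod_mem_of_add_mod_mem (by omega) h2i (by omega) (by omega)
  have happ1 : dPow (dCyc n) s (dXi n i h1 h2 (dPow (dCyc n) r 1)) = dXi n i h1 h2 1 :=
    happ (hsrc ▸ Or.inl rfl)
  rw [dPow_dCyc_one n r (by omega), hr] at happ1
  change dPow (dCyc n) s 1 = 1 at happ1
  rw [dPow_dCyc_one n s (by omega)] at happ1
  exact ⟨hr, by omega⟩

/-- For `n ≥ 4`, `1 ≤ i ≤ ⌊(n-1)/2⌋` and `r, s ≥ 0`:
`g^r x_i g^s = x_i` iff `r ≡ 0` and `s ≡ 0 (mod n)`; in particular for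
`0 ≤ r, s ≤ n-1`, `g^r x_i g^s = x_i` iff `r = s = 0`. -/
theorem stmt8 (n i r s : ℕ) (h1 : 1 ≤ i) (h2 : i ≤ (n - 1) / 2) :
    (((dPow (dCyc n) r).trans (dXi n i h1 (by omega))).trans (dPow (dCyc n) s)
        ≈ dXi n i h1 (by omega) ↔ r % n = 0 ∧ s % n = 0) ∧
    (r ≤ n - 1 → s ≤ n - 1 →
      ((((dPow (dCyc n) r).trans (dXi n i h1 (by omega))).trans (dPow (dCyc n) s)
        ≈ dXi n i h1 (by omega)) ↔ (r = 0 ∧ s = 0))) := by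
  have main : ((dPow (dCyc n) r).trans (dXi n i h1 (by omega))).trans (dPow (dCyc n) s)
      ≈ dXi n i h1 (by omega) ↔ r % n = 0 ∧ s % n = 0 :=
    ⟨mod_eq_zero_of_trans_dXi_trans_eqOnSource h1 _ (by omega),
      fun ⟨hr, hs⟩ => trans_dXi_trans_eqOnSource_of_mod_eq_zero h1 _ hr hs⟩
  refine ⟨main, fun hr hs => ?_⟩
  rw [main, Nat.mod_eq_of_lt (by omega : r < n), Nat.mod_eq_of_lt (by omega : s < n)]
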